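/- Let G be a group, fix elements g₁, …, g_n ∈ G, and for v ∈ G^n × G^(2g) with components (v₁, …, v_n, C₁, …, C_{2g}) set u_i = v_i g_i v_i⁻¹. Fix indices 1 ≤ ν < μ ≤ n and set u_κ = u_μ u_ν. For g ∈ G define ρ(g) : v_ν ↦ g v_ν; v_τ ↦ [g, u_ν] v_τ for ν < τ < μ; v_μ ↦ g v_μ; v_τ ↦ [g, u_κ] v_τ for τ > μ; v_τ unchanged for τ < ν; and C_l ↦ [g, u_κ] C_l [g, u_κ]⁻¹ for l = 1,…,2g, where u_ν, u_κ are computed from the argument tuple and [x,y] = x y x⁻¹ y⁻¹. Then ρ is a left action of G on G^(n+2g), and u_κ is conjugation-equivariant: u_κ evaluated on ρ(g) of a tuple equals g · u_κ · g⁻¹ evaluated on that tuple. -/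

import Mathlib

/-- The group commutator `[x,y] = x y x⁻¹ y⁻¹`. -/
def gcomm {G : Type*} [Group G] (x y : G) : G := x * y * x⁻¹ * y⁻¹

/-!
Write `ρ(g)(v, C) = (T g v, [g, u_κ v] • C)`, where `T g v τ = c_τ(g, v) v_τ` and `•` is
conjugation. Each factor `c_τ(g, v)` is one of `g`, `[g, u_ν v]`, `[g, u_κ v]`, `1`, and each of
these satisfies the cocycle identity `c(g₁g₂, v) = c(g₁, T g₂ v) c(g₂, v)`: for `[g, w v]` this is
`[g₁g₂, x] = [g₁, g₂ x g₂⁻¹] [g₂, x]` combined with `w (T g v) = g (w v) g⁻¹`, which holds for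
`w = u_ν, u_κ` because `T g` multiplies `v_ν` and `v_μ` on the left by `g`. Cocycle identities for
the factors are exactly the action axioms for the twisted map and its skew product with conjugation.
-/

section Commutator

variable {G : Type*} [Group G]

theorem gcomm_one_left (x : G) : gcomm 1 x = 1 := by
  simp [gcomm]

theorem gcomm_mul_left (g₁ g₂ x : G) :
    gcomm (g₁ * g₂) x = gcomm g₁ (g₂ * x * g₂⁻¹) * gcomm g₂ x := by
  simp only [gcomm]
  group

end Commutator

section Cocycle

variable {G X : Type*} [Group G]

structure IsCocycle (T : G → X → X) (c : G → X → G) : Prop where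
  map_one : ∀ x, c 1 x = 1
  map_mul : ∀ g₁ g₂ x, c (g₁ * g₂) x = c g₁ (T g₂ x) * c g₂ x

namespace IsCocycle

variable {T : G → X → X}

theorem const_one : IsCocycle T fun _ _ => 1 :=
  ⟨fun _ => rfl, fun _ _ _ => (mul_one 1).symm⟩

theorem id_left : IsCocycle T fun g _ => g :=
  ⟨fun _ => rfl, fun _ _ _ => rfl⟩

theorem gcomm_of_conj_equivariant {w : X → G} (hw : ∀ g x, w (T g x) = g * w x * g⁻¹) :
    IsCocycle T fun g x => gcomm g (w x) where
  map_one x := gcomm_one_left (w x)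
  map_mul g₁ g₂ x := by rw [hw, gcomm_mul_left]

theorem ite {c₁ c₂ : G → X → G} (p : Prop) [Decidable p] (h₁ : IsCocycle T c₁)
    (h₂ : IsCocycle T c₂) : IsCocycle T fun g x => if p then c₁ g x else c₂ g x := by
  split_ifs
  exacts [h₁, h₂]

end IsCocycle

end Cocycle

section TwistedAction

variable {G ι X : Type*} [Group G]

def twistedLeftMul (c : ι → G → (ι → G) → G) (g : G) (v : ι → G) : ι → G :=
  fun τ => c τ g v * v τ

theorem twistedLeftMul_one {c : ι → G → (ι → G) → G}
    (hc : ∀ τ, IsCocycle (twistedLeftMul c) (c τ)) (v : ι → G) :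
    twistedLeftMul c 1 v = v := by
  funext τ
  simp [twistedLeftMul, (hc τ).map_one]

theorem twistedLeftMul_mul {c : ι → G → (ι → G) → G}
    (hc : ∀ τ, IsCocycle (twistedLeftMul c) (c τ)) (g₁ g₂ : G) (v : ι → G) :
    twistedLeftMul c (g₁ * g₂) v = twistedLeftMul c g₁ (twistedLeftMul c g₂ v) := by
  funext τ
  simp only [twistedLeftMul, (hc τ).map_mul, mul_assoc]

def skewConj (T : G → X → X) (d : G → X → G) (g : G) (q : X × (ι → G)) : X × (ι → G) :=
  (T g q.1, fun l => d g q.1 * q.2 l * (d g q.1)⁻¹)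

theorem skewConj_one {T : G → X → X} {d : G → X → G} (hT : ∀ x, T 1 x = x)
    (hd : IsCocycle T d) (q : X × (ι → G)) : skewConj T d 1 q = q := by
  simp [skewConj, hT, hd.map_one]

theorem skewConj_mul {T : G → X → X} {d : G → X → G}
    (hT : ∀ g₁ g₂ x, T (g₁ * g₂) x = T g₁ (T g₂ x)) (hd : IsCocycle T d) (g₁ g₂ : G)
    (q : X × (ι → G)) : skewConj T d (g₁ * g₂) q = skewConj T d g₁ (skewConj T d g₂ q) := by
  simp only [skewConj, hT, hd.map_mul, Prod.mk.injEq, true_and]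
  funext l
  group

end TwistedAction

theorem lifted_action_for_curve_kappa_nu_mu_general {G : Type*} [Group G] {n k : ℕ}
    (gg : Fin n → G) (ν μ' : Fin n)
    (u : (Fin n → G) → Fin n → G)
    (hu : ∀ v i, u v i = v i * gg i * (v i)⁻¹)
    (uκ : (Fin n → G) → G) (huκ : ∀ v, uκ v = u v μ' * u v ν)
    (ρ : G → ((Fin n → G) × (Fin k → G)) → ((Fin n → G) × (Fin k → G)))
    (hρ : ∀ (g : G) (v : Fin n → G) (C : Fin k → G),
      ρ g (v, C) =
        (fun τ =>
          if τ = ν then g * v τ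
          else if τ = μ' then g * v τ
          else if ν < τ ∧ τ < μ' then gcomm g (u v ν) * v τ
          else if μ' < τ then gcomm g (uκ v) * v τ
          else v τ,
         fun l => gcomm g (uκ v) * C l * (gcomm g (uκ v))⁻¹)) :
    (∀ q, ρ 1 q = q) ∧ (∀ g₁ g₂ q, ρ (g₁ * g₂) q = ρ g₁ (ρ g₂ q)) ∧
    (∀ (g : G) (v : Fin n → G) (C : Fin k → G),
      uκ (ρ g (v, C)).1 = g * uκ v * g⁻¹) := by
  set c : Fin n → G → (Fin n → G) → G := fun τ g v =>
    if τ = ν then g else if τ = μ' then g else if ν < τ ∧ τ < μ' then gcomm g (u v ν)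
    else if μ' < τ then gcomm g (uκ v) else 1
  set T := twistedLeftMul c
  have hu_conj : ∀ i, (∀ g v, T g v i = g * v i) → ∀ g v, u (T g v) i = g * u v i * g⁻¹ := by
    intro i hTi g v
    rw [hu, hu, hTi]
    group
  have huν : ∀ g v, u (T g v) ν = g * u v ν * g⁻¹ :=
    hu_conj ν fun g v => by simp [T, twistedLeftMul, c]
  have huμ : ∀ g v, u (T g v) μ' = g * u v μ' * g⁻¹ :=
    hu_conj μ' fun g v => by simp [T, twistedLeftMul, c]
  have huκT : ∀ g v, uκ (T g v) = g * uκ v * g⁻¹ := by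
    intro g v
    rw [huκ, huκ, huν, huμ]
    group
  have hc : ∀ τ, IsCocycle T (c τ) := fun τ =>
    .ite _ .id_left <| .ite _ .id_left <| .ite _ (.gcomm_of_conj_equivariant huν) <|
      .ite _ (.gcomm_of_conj_equivariant huκT) .const_one
  have hρT : ρ = skewConj T fun g v => gcomm g (uκ v) := by
    funext g ⟨v, C⟩
    rw [hρ]
    congr 1
    funext τ
    simp only [T, twistedLeftMul, c]
    split_ifs <;> simp
  subst hρT
  exact ⟨skewConj_one (twistedLeftMul_one hc) (.gcomm_of_conj_equivariant huκT),
    skewConj_mul (twistedLeftMul_mul hc) (.gcomm_of_conj_equivariant huκT),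
    fun g v _ => huκT g v⟩

/-- The lifted `G`-action associated to the curve `κ_{ν,μ} = m_μ m_ν`: with
`u_i = v_i g_i v_i⁻¹` and `u_κ = u_μ u_ν`, the map `ρ(g)` sending `v_ν ↦ g v_ν`,
`v_τ ↦ [g,u_ν] v_τ` for `ν < τ < μ`, `v_μ ↦ g v_μ`, `v_τ ↦ [g,u_κ] v_τ` for `τ > μ`,
leaving `v_τ` fixed for `τ < ν`, and `C_l ↦ [g,u_κ] C_l [g,u_κ]⁻¹`, is a left action
of `G` on `G^(n+2g)`, and `u_κ` is conjugation-equivariant. -/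
theorem lifted_action_for_curve_kappa_nu_mu {G : Type*} [Group G] {n k : ℕ}
    (gg : Fin n → G) (ν μ' : Fin n) (hνμ : ν < μ')
    (u : (Fin n → G) → Fin n → G)
    (hu : ∀ v i, u v i = v i * gg i * (v i)⁻¹)
    (uκ : (Fin n → G) → G) (huκ : ∀ v, uκ v = u v μ' * u v ν)
    (ρ : G → ((Fin n → G) × (Fin k → G)) → ((Fin n → G) × (Fin k → G)))
    (hρ : ∀ (g : G) (v : Fin n → G) (C : Fin k → G),
      ρ g (v, C) =
        (fun τ =>
          if τ = ν then g * v τ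
          else if τ = μ' then g * v τ
          else if ν < τ ∧ τ < μ' then gcomm g (u v ν) * v τ
          else if μ' < τ then gcomm g (uκ v) * v τ
          else v τ,
         fun l => gcomm g (uκ v) * C l * (gcomm g (uκ v))⁻¹)) :
    (∀ q, ρ 1 q = q) ∧ (∀ g₁ g₂ q, ρ (g₁ * g₂) q = ρ g₁ (ρ g₂ q)) ∧
    (∀ (g : G) (v : Fin n → G) (C : Fin k → G),
      uκ (ρ g (v, C)).1 = g * uκ v * g⁻¹) :=
  lifted_action_for_curve_kappa_nu_mu_general gg ν μ' u hu uκ huκ ρ hρ
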